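/- arXiv:1605.08580 — 4 statements merged into one kernel-verified Lean document; each statement's English description precedes it below -/
import Mathlib

section
/- Let Y be an uncountable set with the discrete topology and X = Y ∪ {∞} its one-point compactification. Then X cannot be the support of any Radon measure: for every finite regular Borel measure m on X, the support of m is a proper subset of X. -/
open MeasureTheory Topology

/-- The support of a measure: points all of whose open neighborhoods have positive measure. -/
def mSupport {X : Type*} [TopologicalSpace X] [MeasurableSpace X] (m : Measure X) : Set X :=
  {x | ∀ U : Set X, IsOpen U → x ∈ U → 0 < m U}

/-- The one-point compactification `X = Y ∪ {∞}` of an uncountable discrete space `Y`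
cannot be the support of any Radon (finite regular Borel) measure. -/
theorem stmt_0 {Y : Type*} [TopologicalSpace Y] [DiscreteTopology Y] [Uncountable Y]
    [MeasurableSpace (OnePoint Y)] [BorelSpace (OnePoint Y)]
    (m : Measure (OnePoint Y)) [IsFiniteMeasure m] (hreg : m.Regular) :
    mSupport m ≠ Set.univ := by
  intro h
  have hopen : ∀ y : Y, IsOpen ({(y : OnePoint Y)} : Set (OnePoint Y)) := by
    intro y
    have := OnePoint.isOpenEmbedding_coe (X := Y)
    simpa using this.isOpenMap {y} (isOpen_discrete _)
  have hpos : ∀ y : Y, 0 < m {(y : OnePoint Y)} := by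
    intro y
    have hy : (y : OnePoint Y) ∈ mSupport m := h ▸ Set.mem_univ _
    exact hy _ (hopen y) rfl
  have hcount : Set.Countable {y : Y | 0 < m ({(y : OnePoint Y)} : Set (OnePoint Y))} := by
    apply Measure.countable_meas_pos_of_disjoint_iUnion
      (As := fun y : Y => ({(y : OnePoint Y)} : Set (OnePoint Y)))
    · exact fun y => (hopen y).measurableSet
    · intro a b hab
      simp [Function.onFun, Set.disjoint_singleton, hab]
  have : Set.Countable (Set.univ : Set Y) := by
    convert hcount using 1
    ext y; simp [hpos y]
  exact (Set.not_countable_univ) this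
end

section
/- Let G be a locally compact groupoid admitting a Haar system (μ^x)_{x∈X}, and suppose each μ^x has support equal to G^x = r⁻¹(x), each μ^x is left-invariant under composition, and x ↦ ∫ φ dμ^x is continuous for each φ ∈ C_c(G). Then the range map r : G → X is open. -/
/-!
Given `g ∈ U` with `U` open, Urysohn gives `φ ∈ C_c(G)` with `0 ≤ φ`, `φ g = 1` and `supp φ ⊆ U`.
For a Radon measure, `∫ φ dμ^x > 0` exactly when `supp φ` meets `supp μ^x = G^x`, i.e. when
`x ∈ r(supp φ)`. So the set where `x ↦ ∫ φ dμ^x` is positive is an open neighbourhood of `r g`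
inside `r(U)`.
-/

/-- A topological groupoid with arrow space `H` over the object space `X`.
Composition is a total function, subject to axioms only on composable pairs
(`s g = r h`). -/
structure TopGroupoid (H X : Type*) [TopologicalSpace H] [TopologicalSpace X] where
  r : H → X
  s : H → X
  ε : X → H
  mul : H → H → H
  inv : H → H
  continuous_r : Continuous r
  continuous_s : Continuous s
  continuous_ε : Continuous ε
  continuous_inv : Continuous inv
  continuous_mul : Continuous fun p : {p : H × H // s p.1 = r p.2} => mul p.1.1 p.1.2
  r_ε : ∀ x, r (ε x) = x
  s_ε : ∀ x, s (ε x) = x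
  r_mul : ∀ g h, s g = r h → r (mul g h) = r g
  s_mul : ∀ g h, s g = r h → s (mul g h) = s h
  mul_ε : ∀ g, mul g (ε (s g)) = g
  ε_mul : ∀ g, mul (ε (r g)) g = g
  r_inv : ∀ g, r (inv g) = s g
  s_inv : ∀ g, s (inv g) = r g
  mul_inv : ∀ g, mul g (inv g) = ε (r g)
  inv_mul : ∀ g, mul (inv g) g = ε (s g)
  mul_assoc : ∀ g h k, s g = r h → s h = r k → mul (mul g h) k = mul g (mul h k)

open MeasureTheory Topology

namespace MeasureTheory.Measure

variable {Y : Type*} [TopologicalSpace Y] [MeasurableSpace Y]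

theorem mSupport_eq_support (m : Measure Y) : mSupport m = m.support := by
  rw [support_eq_forall_isOpen]
  exact Set.ext fun _ => forall_congr' fun _ => forall_comm

theorem integral_pos_iff_support_inter_support_nonempty [OpensMeasurableSpace Y]
    (m : Measure Y) [m.Regular] {f : Y → ℝ} (hf : Continuous f) (hfc : HasCompactSupport f)
    (hf0 : 0 ≤ f) : 0 < ∫ y, f y ∂m ↔ (Function.support f ∩ m.support).Nonempty := by
  rw [integral_pos_iff_support_of_nonneg hf0 (hf.integrable_of_hasCompactSupport hfc)]
  constructor
  · intro hpos
    by_contra hempty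
    rw [Set.not_nonempty_iff_eq_empty, ← Set.disjoint_iff_inter_eq_empty] at hempty
    exact hpos.ne' (measure_mono_null hempty.subset_compl_right m.measure_compl_support_of_regular)
  · rintro ⟨y, hyf, hym⟩
    exact (m.mem_support_iff_forall y).1 hym _ (hf.isOpen_support.mem_nhds hyf)

end MeasureTheory.Measure

theorem stmt_15_general {H X : Type*} [TopologicalSpace H] [LocallyCompactSpace H] [T2Space H]
    [TopologicalSpace X]
    [MeasurableSpace H] [BorelSpace H]
    (G : TopGroupoid H X) (μ : X → Measure H)
    (hRadon : ∀ x, (μ x).Regular)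
    (hsupp : ∀ x, mSupport (μ x) = G.r ⁻¹' {x})
    (hcont : ∀ φ : H → ℝ, Continuous φ → HasCompactSupport φ →
      Continuous fun x => ∫ g, φ g ∂(μ x)) :
    IsOpenMap G.r := by
  intro U hU
  rw [isOpen_iff_mem_nhds]
  rintro _ ⟨g, hgU, rfl⟩
  obtain ⟨φ, hφg, hφU, hφc, hφrange⟩ := exists_continuous_one_zero_of_isCompact
    isCompact_singleton hU.isClosed_compl (Set.disjoint_singleton_left.2 (not_not.2 hgU))
  have integral_pos_iff (x : X) :
      0 < ∫ h, φ h ∂(μ x) ↔ ∃ h ∈ Function.support φ, G.r h = x := by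
    have := hRadon x
    rw [(μ x).integral_pos_iff_support_inter_support_nonempty φ.continuous hφc
      fun y => (hφrange y).1, ← Measure.mSupport_eq_support, hsupp]
    rfl
  have hg : G.r g ∈ {x | 0 < ∫ h, φ h ∂(μ x)} :=
    (integral_pos_iff _).2 ⟨g, by simp [hφg rfl], rfl⟩
  refine Filter.mem_of_superset
    ((isOpen_lt continuous_const (hcont φ φ.continuous hφc)).mem_nhds hg) ?_
  intro x hx
  obtain ⟨h, hφh, rfl⟩ := (integral_pos_iff x).1 hx
  exact ⟨h, not_not.1 fun hhU => hφh (hφU hhU), rfl⟩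

/-- If a locally compact groupoid admits a Haar system `(μ^x)` — Radon measures with
`supp μ^x = G^x = r⁻¹(x)`, left invariance `∫ φ(αg) dμ^{s α}(g) = ∫ φ dμ^{r α}`, and
continuity of `x ↦ μ^x(φ)` for `φ ∈ C_c(G)` — then the range map is open. -/
theorem stmt_15 {H X : Type*} [TopologicalSpace H] [LocallyCompactSpace H] [T2Space H]
    [TopologicalSpace X] [LocallyCompactSpace X] [T2Space X]
    [MeasurableSpace H] [BorelSpace H]
    (G : TopGroupoid H X) (μ : X → Measure H)
    (hRadon : ∀ x, (μ x).Regular)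
    (hsupp : ∀ x, mSupport (μ x) = G.r ⁻¹' {x})
    (hinv : ∀ (α : H) (φ : H → ℝ), Continuous φ → HasCompactSupport φ →
      ∫ g, φ (G.mul α g) ∂(μ (G.s α)) = ∫ g, φ g ∂(μ (G.r α)))
    (hcont : ∀ φ : H → ℝ, Continuous φ → HasCompactSupport φ →
      Continuous fun x => ∫ g, φ g ∂(μ x)) :
    IsOpenMap G.r :=
  stmt_15_general G μ hRadon hsupp hcont
end

section
/- Let X be a compact Hausdorff space such that no Radon measure on X has full support. If G = X × X is the pair groupoid, then G is a compact groupoid whose range map is open but which admits no Haar system; hence openness of the range map does not imply existence of a Haar system. -/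
open MeasureTheory Topology

/-- Let `X` be a compact Hausdorff space such that no Radon measure on `X` has full support.
Then the pair groupoid `G = X × X` is compact, its range map `r(x,y) = x` is open, but it
admits no Haar system `(μ^x)` (Radon measures with `supp μ^x = G^x = {x} × X`, invariance
`∫ φ((x, g.2)) dμ^y(g) = ∫ φ dμ^x`, and continuity of `x ↦ μ^x(φ)`).  Hence openness of the
range map does not imply the existence of a Haar system. -/
theorem stmt_16 {X : Type*} [TopologicalSpace X] [CompactSpace X] [T2Space X]
    [MeasurableSpace X] [BorelSpace X]
    (hX : ∀ m : Measure X, IsFiniteMeasure m → m.Regular → mSupport m ≠ Set.univ) :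
    CompactSpace (X × X) ∧
    IsOpenMap (fun g : X × X => g.1) ∧
    ¬ ∃ μ : X → Measure (X × X),
        (∀ x, IsFiniteMeasure (μ x)) ∧ (∀ x, (μ x).Regular) ∧
        (∀ x, mSupport (μ x) = {x} ×ˢ (Set.univ : Set X)) ∧
        (∀ (x y : X) (φ : X × X → ℝ), Continuous φ →
          ∫ g, φ (x, g.2) ∂(μ y) = ∫ g, φ g ∂(μ x)) ∧
        (∀ φ : X × X → ℝ, Continuous φ →
          Continuous fun x => ∫ g, φ g ∂(μ x)) := by
  refine ⟨inferInstance, isOpenMap_fst, ?_⟩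
  rintro ⟨μ, hfin, hreg, hsupp, -, -⟩
  rcases isEmpty_or_nonempty X with h | ⟨⟨x₀⟩⟩
  · exact hX 0 inferInstance inferInstance
      (Set.eq_univ_of_forall fun x => (h.false x).elim)
  haveI := hfin x₀
  haveI := hreg x₀
  set m : Measure X := (μ x₀).map Prod.snd with hm
  have hsnd : Measurable (Prod.snd : X × X → X) := measurable_snd
  have hmap : ∀ {S : Set X}, MeasurableSet S → m S = μ x₀ (Set.univ ×ˢ S) := by
    intro S hS
    rw [hm, Measure.map_apply hsnd hS]
    congr 1
    ext p
    simp
  haveI hmfin : IsFiniteMeasure m := by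
    rw [hm]; infer_instance
  haveI houter : m.OuterRegular := by
    constructor
    intro A hA r hr
    rw [hmap hA] at hr
    obtain ⟨V, hAV, hVopen, hV⟩ :=
      MeasureTheory.Measure.OuterRegular.outerRegular (μ := μ x₀)
        (MeasurableSet.univ.prod hA) r hr
    refine ⟨(Prod.snd '' Vᶜ)ᶜ, ?_, ?_, ?_⟩
    · intro a ha hmem
      obtain ⟨p, hp, hpa⟩ := hmem
      exact hp (hAV ⟨trivial, by simpa [hpa] using ha⟩)
    · exact (((hVopen.isClosed_compl.isCompact).image continuous_snd).isClosed).isOpen_compl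
    · have hU : IsOpen (Prod.snd '' Vᶜ)ᶜ :=
        (((hVopen.isClosed_compl.isCompact).image continuous_snd).isClosed).isOpen_compl
      rw [hmap hU.measurableSet]
      refine lt_of_le_of_lt (measure_mono ?_) hV
      rintro ⟨x, y⟩ ⟨-, hy⟩
      by_contra hxy
      exact hy ⟨(x, y), hxy, rfl⟩
  have hinner : m.InnerRegularWRT IsCompact IsOpen := by
    intro U hU r hr
    have hpre : (Set.univ : Set X) ×ˢ U = (Prod.snd : X × X → X) ⁻¹' U := by ext p; simp
    rw [hmap hU.measurableSet, hpre] at hr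
    obtain ⟨C, hCU, hCcomp, hC⟩ :=
      (hreg x₀).innerRegular (hU.preimage continuous_snd) r hr
    refine ⟨Prod.snd '' C, Set.image_subset_iff.2 hCU, hCcomp.image continuous_snd, ?_⟩
    have hKmeas : MeasurableSet (Prod.snd '' C) :=
      ((hCcomp.image continuous_snd).isClosed).measurableSet
    rw [hmap hKmeas]
    refine lt_of_lt_of_le hC (measure_mono ?_)
    intro p hp
    exact ⟨trivial, ⟨p, hp, rfl⟩⟩
  haveI hmreg : m.Regular := ⟨hinner⟩
  apply hX m inferInstance hmreg
  apply Set.eq_univ_of_forall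
  intro x U hUopen hxU
  have hmem : (x₀, x) ∈ mSupport (μ x₀) := by
    rw [hsupp x₀]; exact ⟨rfl, trivial⟩
  have := hmem (Set.univ ×ˢ U) (isOpen_univ.prod hUopen) ⟨trivial, hxU⟩
  rwa [hmap hUopen.measurableSet]
end

section
/- Let X be the closed unit ball of a Hilbert space of uncountable orthonormal dimension, equipped with the weak topology. Then X is a compact Hausdorff space (Banach–Alaoglu) and X is not the support of any Radon measure. -/
open MeasureTheory

noncomputable section

/-- The closed unit ball of a Hilbert space, equipped with the weak topology. -/
def ballWeak (H : Type*) [NormedAddCommGroup H] [InnerProductSpace ℝ H] : Type _ :=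
  {v : H // ‖v‖ ≤ 1}

instance (H : Type*) [NormedAddCommGroup H] [InnerProductSpace ℝ H] :
    TopologicalSpace (ballWeak H) :=
  TopologicalSpace.induced (fun v : {v : H // ‖v‖ ≤ 1} => toWeakSpace ℝ H v.1)
    inferInstance

instance (H : Type*) [NormedAddCommGroup H] [InnerProductSpace ℝ H] :
    MeasurableSpace (ballWeak H) := borel _

/-!
Riesz's identification `H ≃ H*` is a homeomorphism from the weak topology to the weak-* topology,
so it carries the weak unit ball onto the weak-* unit ball of `H*`, which is compact Hausdorff
by Banach–Alaoglu.

For a Hilbert basis `(e i)`, the weakly open sets `{v | 4/5 < ⟪e i, v⟫}` are nonempty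
(`e i` lies in the `i`-th) and pairwise disjoint, since by Bessel's inequality a vector of norm
at most `1` has at most one coefficient above `1/√2`. A measure of full support charges each of
them, but a finite measure charges only countably many disjoint measurable sets; so `ι` would be
countable.
-/

open InnerProductSpace Topology RealInnerProductSpace Function

theorem countable_of_pairwise_disjoint_isOpen_of_mSupport_eq_univ {X ι : Type*}
    [TopologicalSpace X] [MeasurableSpace X] [OpensMeasurableSpace X] {μ : Measure X} [SFinite μ]
    (hμ : mSupport μ = Set.univ) {U : ι → Set X} (hU : ∀ i, IsOpen (U i))
    (hne : ∀ i, (U i).Nonempty) (hdisj : Pairwise (Disjoint on U)) : Countable ι := by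
  have hpos : ∀ i, 0 < μ (U i) := fun i ↦ by
    obtain ⟨x, hx⟩ := hne i
    exact (hμ.symm ▸ Set.mem_univ x : x ∈ mSupport μ) _ (hU i) hx
  rw [← Set.countable_univ_iff]
  exact (Measure.countable_meas_pos_of_disjoint_iUnion (fun i ↦ (hU i).measurableSet) hdisj).mono
    fun i _ ↦ hpos i

theorem Orthonormal.eq_of_lt_inner {H ι : Type*} [NormedAddCommGroup H] [InnerProductSpace ℝ H]
    {e : ι → H} (he : Orthonormal ℝ e) {x : H} (hx : ‖x‖ ≤ 1) {i j : ι}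
    (hi : 4 / 5 < ⟪e i, x⟫) (hj : 4 / 5 < ⟪e j, x⟫) : i = j := by
  classical
  by_contra hij
  have hbessel := he.sum_inner_products_le (x := x) (s := {i, j})
  rw [Finset.sum_pair hij, Real.norm_eq_abs, Real.norm_eq_abs, sq_abs, sq_abs] at hbessel
  nlinarith [norm_nonneg x]

namespace InnerProductSpace

variable (H : Type*) [NormedAddCommGroup H] [InnerProductSpace ℝ H] [CompleteSpace H]

def toWeakDualHomeomorph : WeakSpace ℝ H ≃ₜ WeakDual ℝ H where
  toFun x := toDual ℝ H x
  invFun f := (toDual ℝ H).symm f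
  left_inv := (toDual ℝ H).symm_apply_apply
  right_inv := (toDual ℝ H).apply_symm_apply
  continuous_toFun := WeakBilin.continuous_of_continuous_eval _ fun y ↦
    (WeakBilin.eval_continuous (topDualPairing ℝ H).flip (innerSL ℝ y)).congr fun _ ↦
      real_inner_comm (F := H) _ _
  continuous_invFun := WeakBilin.continuous_of_continuous_eval _ fun g ↦
    (WeakBilin.eval_continuous (topDualPairing ℝ H) ((toDual ℝ H).symm g)).congr fun f ↦
      (toDual_symm_apply (y := (f : StrongDual ℝ H))).symm.trans <|
        (real_inner_comm _ _).trans toDual_symm_apply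

end InnerProductSpace

namespace ballWeak

variable {H : Type*} [NormedAddCommGroup H] [InnerProductSpace ℝ H]

instance : BorelSpace (ballWeak H) := ⟨rfl⟩

theorem continuous_inner (y : H) : Continuous fun v : ballWeak H ↦ ⟪y, v.1⟫ :=
  (WeakBilin.eval_continuous (topDualPairing ℝ H).flip (innerSL ℝ y)).comp continuous_induced_dom

variable [CompleteSpace H]

variable (H) in
def toWeakDual (v : ballWeak H) : WeakDual ℝ H :=
  toWeakDualHomeomorph H (toWeakSpace ℝ H v.1)

theorem isEmbedding_toWeakDual : IsEmbedding (toWeakDual H) :=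
  (toWeakDualHomeomorph H).isEmbedding.comp ⟨⟨rfl⟩, Subtype.val_injective⟩

theorem range_toWeakDual :
    Set.range (toWeakDual H) = WeakDual.toStrongDual ⁻¹' Metric.closedBall 0 1 := by
  ext f
  simp only [Set.mem_range, Set.mem_preimage, mem_closedBall_zero_iff]
  constructor
  · rintro ⟨v, rfl⟩
    exact ((toDual ℝ H).norm_map v.1).trans_le v.2
  · intro hf
    exact ⟨⟨(toDual ℝ H).symm f, ((toDual ℝ H).symm.norm_map f).trans_le hf⟩,
      (toDual ℝ H).apply_symm_apply f⟩

instance : CompactSpace (ballWeak H) := by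
  rw [← isCompact_univ_iff, isEmbedding_toWeakDual.isCompact_iff, Set.image_univ,
    range_toWeakDual]
  exact WeakDual.isCompact_closedBall 0 1

instance : T2Space (ballWeak H) := isEmbedding_toWeakDual.t2Space

end ballWeak

/-- The closed unit ball `X` of a Hilbert space of uncountable orthonormal dimension,
with the weak topology, is a compact Hausdorff space (Banach–Alaoglu) which is not the
support of any Radon measure (finite Borel measure, inner regular w.r.t. compacts). -/
theorem stmt_19 {H : Type*} [NormedAddCommGroup H] [InnerProductSpace ℝ H]
    [CompleteSpace H] {ι : Type*} (b : HilbertBasis ι ℝ H) (hι : ¬ Countable ι) :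
    CompactSpace (ballWeak H) ∧ T2Space (ballWeak H) ∧
      ∀ m : Measure (ballWeak H), IsFiniteMeasure m → m.InnerRegular →
        mSupport m ≠ Set.univ := by
  refine ⟨inferInstance, inferInstance, fun m _ _ hm ↦ hι ?_⟩
  refine countable_of_pairwise_disjoint_isOpen_of_mSupport_eq_univ hm
    (U := fun i ↦ {v : ballWeak H | 4 / 5 < ⟪b i, v.1⟫})
    (fun i ↦ isOpen_lt continuous_const (ballWeak.continuous_inner _)) (fun i ↦ ?_)
    fun i j hij ↦ Set.disjoint_left.2 fun v hi hj ↦ hij (b.orthonormal.eq_of_lt_inner v.2 hi hj)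
  refine ⟨⟨b i, (b.orthonormal.1 i).le⟩, ?_⟩
  show 4 / 5 < ⟪b i, b i⟫
  rw [real_inner_self_eq_norm_sq, b.orthonormal.1 i]
  norm_num
end
end
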